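/- In the directed polymer model with environment law ν satisfying the stated conditions, there is a positive constant κ depending only on ν and the dimension d such that for every n ≥ 1 and every β ≥ 0, the probability that there exists a set A ⊆ {1,…,n} with |A| ≥ n/2 and ∑_{k∈A} γ_k ≤ κ|A| is at most e^{−n}. -/

import Mathlib

/-!
Since `γ_k` is the Gibbs average of `h(ω_{k,x_k})` over paths, `∑_{k∈A} γ_k ≤ κ|A|` forces some
path `p` to satisfy `∑_{k∈A} h(ω_{k,p_k}) ≤ κ|A|`. The function `h` is positive on `(a,b)`: its
numerator `∫_x^b (y - m) f(y) dy` is a tail of a centred integral that vanishes over `(a,b)`. Hence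
`E e^{-t h(ω)} → 0` as `t → ∞`, and a Chernoff bound with `κ = 1/t` makes each of the at most
`2^n (3^d)^n` events indexed by `(A, p)` smaller than `(2 · 3^d · e)^{-n}`; a union bound
gives `e^{-n}`.
-/

open MeasureTheory ProbabilityTheory Set

noncomputable section

/-- A nearest-neighbor path of length `n` in `ℤ^d` starting from the origin: `toFun 0` is the
origin, and consecutive vertices are nearest neighbors in `ℤ^d`. The vertices of the path (as in
the paper, which omits the starting point) are `toFun 1, …, toFun n`. -/
structure PolymerPath (d n : ℕ) where
  toFun : Fin (n + 1) → Fin d → ℤ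
  start_eq : toFun 0 = 0
  adj : ∀ k : Fin n, (∑ i, |toFun k.succ i - toFun k.castSucc i|) = 1

/-- The `k`-th vertex `x_k` of a path, for `k = 1, …, n` (indexed by `Fin n`). -/
def PolymerPath.vertex {d n : ℕ} (p : PolymerPath d n) (k : Fin n) : Fin d → ℤ :=
  p.toFun k.succ

/-- The overlap `|p ∩ q|`, i.e. the number of indices `k ∈ {1, …, n}` with `x_k = x_k'`. -/
def overlap {d n : ℕ} (p q : PolymerPath d n) : ℕ :=
  (Finset.univ.filter fun k : Fin n => p.vertex k = q.vertex k).card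

/-- The energy `∑_{k=1}^n ω_{k, x_k}` of a path `p` in the environment `env`
(here `env k x` is `ω_{k+1, x}`, i.e. steps are indexed by `Fin n`). -/
def energy {d n : ℕ} (env : Fin n → (Fin d → ℤ) → ℝ) (p : PolymerPath d n) : ℝ :=
  ∑ k : Fin n, env k (p.vertex k)

/-- The Gibbs weight `exp(β ∑_k ω_{k,x_k})` of a path. -/
def pathWeight {d n : ℕ} (β : ℝ) (env : Fin n → (Fin d → ℤ) → ℝ) (p : PolymerPath d n) : ℝ :=
  Real.exp (β * energy env p)

/-- The partition function `Z = ∑_{p ∈ 𝒫_n} exp(β ∑_k ω_{k,x_k})`. -/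
def partitionZ (d n : ℕ) (β : ℝ) (env : Fin n → (Fin d → ℤ) → ℝ) : ℝ :=
  ∑' p : PolymerPath d n, pathWeight β env p

/-- The Gibbs (polymer) measure of a single path. -/
def gibbsProb {d n : ℕ} (β : ℝ) (env : Fin n → (Fin d → ℤ) → ℝ) (p : PolymerPath d n) : ℝ :=
  pathWeight β env p / partitionZ d n β env

/-- `θ_{k,x}`: the Gibbs probability that the path visits `x` at step `k`
(`k : Fin n` represents step `k+1`). -/
def theta {d n : ℕ} (β : ℝ) (env : Fin n → (Fin d → ℤ) → ℝ) (k : Fin n) (x : Fin d → ℤ) : ℝ :=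
  ∑' p : PolymerPath d n, if p.vertex k = x then gibbsProb β env p else 0

/-- `α_k = ∑_{x ∈ ℤ^d} θ_{k,x}²`. -/
def alphaOf {d n : ℕ} (β : ℝ) (env : Fin n → (Fin d → ℤ) → ℝ) (k : Fin n) : ℝ :=
  ∑' x : Fin d → ℤ, (theta β env k x) ^ 2

/-- The mean `m = ∫_a^b x f(x) dx` of the probability density `f` supported on `(a,b)`. -/
def densityMean (a b : ℝ) (f : ℝ → ℝ) : ℝ :=
  ∫ x in Set.Ioo a b, x * f x

/-- The function `h(x) = (∫_x^b (y − m) f(y) dy) / f(x)` for `x ∈ (a,b)`. -/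
def hFun (a b : ℝ) (f : ℝ → ℝ) (x : ℝ) : ℝ :=
  (∫ y in Set.Ioo x b, (y - densityMean a b f) * f y) / f x

/-- The (deterministic-level) environment obtained from the family of random variables `W`
at the sample point `ω`: `env k x = ω_{k,x} = W (k,x) ω`. -/
def envOf {d n : ℕ} {Ω : Type*} (W : Fin n × (Fin d → ℤ) → Ω → ℝ) (ω : Ω) :
    Fin n → (Fin d → ℤ) → ℝ :=
  fun k x => W (k, x) ω

/-- The σ-algebra `F_k` generated by the random variables `{ω_{j,y} : j ≠ k, y ∈ ℤ^d}`. -/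
def sigmaAway {d n : ℕ} {Ω : Type*} [MeasurableSpace Ω]
    (W : Fin n × (Fin d → ℤ) → Ω → ℝ) (k : Fin n) : MeasurableSpace Ω :=
  ⨆ i : {i : Fin n × (Fin d → ℤ) // i.1 ≠ k}, MeasurableSpace.comap (W i.val) inferInstance

/-- The random variable `α_k = ∑_x θ_{k,x}²`, as a function of the sample point. -/
def alphaRV {d n : ℕ} {Ω : Type*} (β : ℝ) (W : Fin n × (Fin d → ℤ) → Ω → ℝ) (k : Fin n)
    (ω : Ω) : ℝ :=
  alphaOf β (envOf W ω) k

/-- `γ_k = ∑_x h(ω_{k,x}) θ_{k,x}`. -/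
def gammaOf {d n : ℕ} (h : ℝ → ℝ) (β : ℝ) (env : Fin n → (Fin d → ℤ) → ℝ) (k : Fin n) : ℝ :=
  ∑' x : Fin d → ℤ, h (env k x) * theta β env k x

/-- The random variable `γ_k`, as a function of the sample point. -/
def gammaRV {d n : ℕ} {Ω : Type*} (h : ℝ → ℝ) (β : ℝ)
    (W : Fin n × (Fin d → ℤ) → Ω → ℝ) (k : Fin n) (ω : Ω) : ℝ :=
  gammaOf h β (envOf W ω) k

open Filter Topology

namespace PolymerPath

variable {d n : ℕ}

def step (p : PolymerPath d n) (k : Fin n) (i : Fin d) : Finset.Icc (-1 : ℤ) 1 :=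
  ⟨p.toFun k.succ i - p.toFun k.castSucc i, by
    rw [Finset.mem_Icc, ← abs_le, ← p.adj k]
    exact Finset.single_le_sum (fun j _ => abs_nonneg (p.toFun k.succ j - p.toFun k.castSucc j))
      (Finset.mem_univ i)⟩

lemma step_injective : Function.Injective (step (d := d) (n := n)) := by
  rintro ⟨p, hp0, _⟩ ⟨q, hq0, _⟩ hpq
  obtain rfl : p = q := by
    funext j i
    induction j using Fin.induction with
    | zero => rw [hp0, hq0]
    | succ k ih =>
      have := congrArg Subtype.val (congrFun (congrFun hpq k) i)
      simp only [step] at this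
      linarith
  rfl

instance : Finite (PolymerPath d n) := Finite.of_injective _ step_injective

instance : Fintype (PolymerPath d n) := Fintype.ofFinite _

lemma card_le_pow : Fintype.card (PolymerPath d n) ≤ (3 ^ d) ^ n :=
  (Fintype.card_le_of_injective _ step_injective).trans_eq (by simp)

instance [NeZero d] : Nonempty (PolymerPath d n) :=
  ⟨⟨fun k => Pi.single 0 (k : ℤ), by simp, fun k => by
    rw [Finset.sum_eq_single 0 (fun i _ hi => by simp [hi]) (by simp)]
    simp [Fin.val_succ]⟩⟩

end PolymerPath

lemma exists_le_of_weighted_sum_le {ι : Type*} [Fintype ι] [Nonempty ι] {w x : ι → ℝ} {c : ℝ}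
    (hw : ∀ i, 0 < w i) (hw1 : ∑ i, w i = 1) (h : ∑ i, w i * x i ≤ c) : ∃ i, x i ≤ c := by
  have : ∑ i, w i * x i ≤ ∑ i, w i * c := by rwa [← Finset.sum_mul, hw1, one_mul]
  obtain ⟨i, -, hi⟩ := Finset.exists_le_of_sum_le Finset.univ_nonempty this
  exact ⟨i, le_of_mul_le_mul_left hi (hw i)⟩

section Gibbs

variable {d n : ℕ} {β : ℝ} {env : Fin n → (Fin d → ℤ) → ℝ}

lemma gammaOf_eq_sum (h : ℝ → ℝ) (k : Fin n) :
    gammaOf h β env k = ∑ p : PolymerPath d n, gibbsProb β env p * h (env k (p.vertex k)) := by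
  simp_rw [gammaOf, theta, tsum_fintype, Finset.mul_sum, mul_ite, mul_zero]
  rw [Summable.tsum_finsetSum fun p _ => summable_of_ne_finset_zero (s := {p.vertex k})
    fun x hx => if_neg fun h => hx (Finset.mem_singleton.2 h.symm)]
  simp [mul_comm]

variable [NeZero d]

lemma partitionZ_pos : 0 < partitionZ d n β env := by
  rw [partitionZ, tsum_fintype]
  exact Finset.sum_pos (fun p _ => Real.exp_pos _) Finset.univ_nonempty

lemma gibbsProb_pos (p : PolymerPath d n) : 0 < gibbsProb β env p :=
  div_pos (Real.exp_pos _) partitionZ_pos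

lemma sum_gibbsProb : ∑ p : PolymerPath d n, gibbsProb β env p = 1 := by
  unfold gibbsProb
  rw [← Finset.sum_div, div_eq_one_iff_eq partitionZ_pos.ne', partitionZ, tsum_fintype]

lemma exists_path_sum_le_of_sum_gammaOf_le (h : ℝ → ℝ) (A : Finset (Fin n)) {c : ℝ}
    (hc : ∑ k ∈ A, gammaOf h β env k ≤ c) :
    ∃ p : PolymerPath d n, ∑ k ∈ A, h (env k (p.vertex k)) ≤ c := by
  refine exists_le_of_weighted_sum_le (w := gibbsProb β env) gibbsProb_pos sum_gibbsProb ?_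
  simpa only [gammaOf_eq_sum, Finset.mul_sum, Finset.sum_comm (s := A)] using hc

end Gibbs

lemma measurable_of_continuousOn_of_eq_zero {α β : Type*} [TopologicalSpace α]
    [MeasurableSpace α] [OpensMeasurableSpace α] [TopologicalSpace β] [MeasurableSpace β]
    [BorelSpace β] [Zero β] {g : α → β} {s : Set α} (hs : MeasurableSet s)
    (hg : ContinuousOn g s) (h0 : ∀ x ∉ s, g x = 0) : Measurable g := by
  classical
  have : s.piecewise g 0 = g := funext fun x => by by_cases hx : x ∈ s <;> simp [hx, h0]
  exact this ▸ hg.measurable_piecewise continuousOn_const hs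

lemma setIntegral_Ioo_pos_of_sign_change {g : ℝ → ℝ} {a b m x : ℝ}
    (hg : IntegrableOn g (Ioo a b)) (hg0 : ∫ y in Ioo a b, g y = 0)
    (hneg : ∀ y ∈ Ioo a b, y < m → g y < 0) (hpos : ∀ y ∈ Ioo a b, m < y → 0 < g y)
    (hx : x ∈ Ioo a b) : 0 < ∫ y in Ioo x b, g y := by
  have hint_ax : IntervalIntegrable g volume a x :=
    (intervalIntegrable_iff_integrableOn_Ioo_of_le hx.1.le).2
      (hg.mono_set (Ioo_subset_Ioo_right hx.2.le))
  have hint_xb : IntervalIntegrable g volume x b :=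
    (intervalIntegrable_iff_integrableOn_Ioo_of_le hx.2.le).2
      (hg.mono_set (Ioo_subset_Ioo_left hx.1.le))
  rw [← integral_Ioc_eq_integral_Ioo, ← intervalIntegral.integral_of_le hx.2.le]
  rw [← integral_Ioc_eq_integral_Ioo, ← intervalIntegral.integral_of_le (hx.1.trans hx.2).le,
    ← intervalIntegral.integral_add_adjacent_intervals hint_ax hint_xb] at hg0
  rcases le_or_gt m x with hmx | hxm
  · exact intervalIntegral.intervalIntegral_pos_of_pos_on hint_xb
      (fun y hy => hpos y ⟨hx.1.trans hy.1, hy.2⟩ (hmx.trans_lt hy.1)) hx.2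
  · have hax : 0 < ∫ y in a..x, -g y :=
      intervalIntegral.intervalIntegral_pos_of_pos_on hint_ax.neg
        (fun y hy => neg_pos.2 (hneg y ⟨hy.1, hy.2.trans hx.2⟩ (hy.2.trans hxm))) hx.1
    rw [intervalIntegral.integral_neg] at hax
    linarith

section Density

variable {a b : ℝ} {f : ℝ → ℝ}

lemma integrableOn_and_setIntegral_eq_one (hf_pos : ∀ x ∈ Ioo a b, 0 < f x)
    (hf_zero : ∀ x ∉ Ioo a b, f x = 0) (hf_meas : Measurable f)
    [IsProbabilityMeasure (volume.withDensity fun x => ENNReal.ofReal (f x))] :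
    IntegrableOn f (Ioo a b) ∧ ∫ x in Ioo a b, f x = 1 := by
  have hf0 : 0 ≤ᵐ[volume] f := ae_of_all _ fun x => by
    by_cases hx : x ∈ Ioo a b
    exacts [(hf_pos x hx).le, (hf_zero x hx).ge]
  have h1 : ∫⁻ x, ENNReal.ofReal (f x) = 1 := by
    have := measure_univ (μ := volume.withDensity fun x => ENNReal.ofReal (f x))
    rwa [withDensity_apply _ MeasurableSet.univ, Measure.restrict_univ] at this
  have hf_int : Integrable f :=
    ⟨hf_meas.aestronglyMeasurable, (hasFiniteIntegral_iff_ofReal hf0).2 (by simp [h1])⟩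
  refine ⟨hf_int.integrableOn, ?_⟩
  rw [setIntegral_eq_integral_of_forall_compl_eq_zero hf_zero,
    integral_eq_lintegral_of_nonneg_ae hf0 hf_meas.aestronglyMeasurable, h1, ENNReal.toReal_one]

lemma setIntegral_sub_densityMean_mul_eq_zero (hf : IntegrableOn f (Ioo a b))
    (hf1 : ∫ x in Ioo a b, f x = 1) :
    ∫ y in Ioo a b, (y - densityMean a b f) * f y = 0 := by
  have hyf : IntegrableOn (fun y => y * f y) (Ioo a b) :=
    hf.continuousOn_mul_of_subset continuousOn_id isCompact_Icc measurableSet_Ioo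
      Ioo_subset_Icc_self
  simp_rw [sub_mul]
  rw [integral_sub hyf (hf.const_mul _), integral_const_mul, hf1, mul_one, densityMean, sub_self]

lemma hFun_pos (hf_pos : ∀ x ∈ Ioo a b, 0 < f x) (hf : IntegrableOn f (Ioo a b))
    (hf1 : ∫ x in Ioo a b, f x = 1) {x : ℝ} (hx : x ∈ Ioo a b) : 0 < hFun a b f x := by
  refine div_pos (setIntegral_Ioo_pos_of_sign_change (m := densityMean a b f) ?_
    (setIntegral_sub_densityMean_mul_eq_zero hf hf1) (fun y hy hym => ?_)
    (fun y hy hym => ?_) hx) (hf_pos x hx)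
  · exact hf.continuousOn_mul_of_subset (continuousOn_id.sub continuousOn_const) isCompact_Icc
      measurableSet_Ioo Ioo_subset_Icc_self
  · exact mul_neg_of_neg_of_pos (sub_neg.2 hym) (hf_pos y hy)
  · exact mul_pos (sub_pos.2 hym) (hf_pos y hy)

lemma hFun_nonneg (hf_pos : ∀ x ∈ Ioo a b, 0 < f x) (hf_zero : ∀ x ∉ Ioo a b, f x = 0)
    (hf : IntegrableOn f (Ioo a b)) (hf1 : ∫ x in Ioo a b, f x = 1) (x : ℝ) :
    0 ≤ hFun a b f x := by
  by_cases hx : x ∈ Ioo a b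
  · exact (hFun_pos hf_pos hf hf1 hx).le
  · rw [hFun, hf_zero x hx, div_zero]

lemma ae_withDensity_hFun_pos (hf_pos : ∀ x ∈ Ioo a b, 0 < f x)
    (hf_zero : ∀ x ∉ Ioo a b, f x = 0) (hf_meas : Measurable f) (hf : IntegrableOn f (Ioo a b))
    (hf1 : ∫ x in Ioo a b, f x = 1) :
    ∀ᵐ x ∂volume.withDensity (fun x => ENNReal.ofReal (f x)), 0 < hFun a b f x := by
  rw [ae_withDensity_iff (by fun_prop)]
  refine ae_of_all _ fun x hfx => hFun_pos hf_pos hf hf1 ?_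
  by_contra hx
  simp [hf_zero x hx] at hfx

end Density

lemma tendsto_mgf_atBot_zero {α : Type*} [MeasurableSpace α] {μ : Measure α} [IsFiniteMeasure μ]
    {X : α → ℝ} (hX : AEMeasurable X μ) (hX0 : ∀ᵐ x ∂μ, 0 < X x) :
    Tendsto (mgf X μ) atBot (𝓝 0) := by
  rw [← integral_zero α ℝ (μ := μ)]
  refine tendsto_integral_filter_of_dominated_convergence (fun _ => 1)
    (Eventually.of_forall fun t => (hX.const_mul t).exp.aestronglyMeasurable) ?_
    (integrable_const 1) ?_
  · filter_upwards [eventually_le_atBot 0] with t ht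
    filter_upwards [hX0] with x hx
    rw [Real.norm_of_nonneg (Real.exp_nonneg _), Real.exp_le_one_iff]
    exact mul_nonpos_of_nonpos_of_nonneg ht hx.le
  · filter_upwards [hX0] with x hx
    exact Real.tendsto_exp_atBot.comp (tendsto_id.atBot_mul_const hx)

lemma measureReal_sum_comp_le_le_exp_mul_mgf_pow {Ω ι : Type*} [MeasurableSpace Ω] {P : Measure Ω}
    {ν : Measure ℝ} {W : ι → Ω → ℝ} (hW : ∀ i, Measurable (W i)) (hind : iIndepFun W P)
    (hmap : ∀ i, P.map (W i) = ν) {h : ℝ → ℝ} (hh : Measurable h) (hh0 : ∀ x, 0 ≤ h x)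
    (s : Finset ι) (c : ℝ) {t : ℝ} (ht : 0 ≤ t) :
    P.real {ω | ∑ i ∈ s, h (W i ω) ≤ c} ≤ Real.exp (t * c) * mgf h ν (-t) ^ s.card := by
  have := hind.isProbabilityMeasure
  set Y : ι → Ω → ℝ := fun i => h ∘ W i
  have hY : ∀ i, Measurable (Y i) := fun i => hh.comp (hW i)
  have hint : Integrable (fun ω => Real.exp (-t * (∑ i ∈ s, Y i) ω)) P := by
    refine (integrable_const 1).mono' (by fun_prop) (ae_of_all _ fun ω => ?_)
    rw [Real.norm_of_nonneg (Real.exp_nonneg _), Real.exp_le_one_iff, Finset.sum_apply]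
    exact mul_nonpos_of_nonpos_of_nonneg (neg_nonpos.2 ht) (Finset.sum_nonneg fun i _ => hh0 _)
  have hmgf : ∀ i, mgf (Y i) P (-t) = mgf h ν (-t) := fun i => by
    rw [← hmap i, mgf_map (hW i).aemeasurable (by fun_prop)]
  have := measure_le_le_exp_mul_mgf c (neg_nonpos.2 ht) hint
  simpa [(hind.comp (fun _ => h) fun _ => hh).mgf_sum hY, hmgf, Finset.sum_apply, Y] using this

lemma measureReal_sum_along_path_le {d n : ℕ} {Ω : Type*} [MeasurableSpace Ω] {P : Measure Ω}
    {ν : Measure ℝ} {W : Fin n × (Fin d → ℤ) → Ω → ℝ} (hW : ∀ i, Measurable (W i))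
    (hind : iIndepFun W P) (hmap : ∀ i, P.map (W i) = ν) {h : ℝ → ℝ} (hh : Measurable h)
    (hh0 : ∀ x, 0 ≤ h x) {t δ : ℝ} (ht : 0 < t) (hδ0 : 0 ≤ δ) (hδ1 : δ ≤ 1)
    (hq : Real.exp 1 * mgf h ν (-t) ≤ δ ^ 2) {A : Finset (Fin n)} (hA : (n : ℝ) ≤ 2 * A.card)
    (p : PolymerPath d n) :
    P.real {ω | ∑ k ∈ A, h (W (k, p.vertex k) ω) ≤ t⁻¹ * A.card} ≤ δ ^ n := by
  set s := A.image fun k => (k, p.vertex k)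
  have hinj : Set.InjOn (fun k => (k, p.vertex k)) A := fun k _ l _ hkl => congrArg Prod.fst hkl
  calc _ = P.real {ω | ∑ i ∈ s, h (W i ω) ≤ t⁻¹ * A.card} := by simp [s, Finset.sum_image hinj]
    _ ≤ Real.exp (t * (t⁻¹ * A.card)) * mgf h ν (-t) ^ s.card :=
        measureReal_sum_comp_le_le_exp_mul_mgf_pow hW hind hmap hh hh0 _ _ ht.le
    _ = (Real.exp 1 * mgf h ν (-t)) ^ A.card := by
        rw [mul_inv_cancel_left₀ ht.ne', Finset.card_image_of_injOn hinj, mul_pow,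
          Real.exp_one_pow]
    _ ≤ (δ ^ 2) ^ A.card := pow_le_pow_left₀ (mul_nonneg (Real.exp_nonneg 1) mgf_nonneg) hq _
    _ ≤ δ ^ n := by
        rw [← pow_mul]
        exact pow_le_pow_of_le_one hδ0 hδ1 (by exact_mod_cast hA)

lemma measureReal_exists_sum_gammaRV_le {d n : ℕ} [NeZero d] {Ω : Type*} [MeasurableSpace Ω]
    {P : Measure Ω} {ν : Measure ℝ} {W : Fin n × (Fin d → ℤ) → Ω → ℝ}
    (hW : ∀ i, Measurable (W i)) (hind : iIndepFun W P) (hmap : ∀ i, P.map (W i) = ν)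
    {h : ℝ → ℝ} (hh : Measurable h) (hh0 : ∀ x, 0 ≤ h x) {t : ℝ} (ht : 0 < t)
    (hq : Real.exp 1 * mgf h ν (-t) ≤ (2 * 3 ^ d * Real.exp 1)⁻¹ ^ 2) (β : ℝ) :
    P.real {ω | ∃ A : Finset (Fin n), (n : ℝ) ≤ 2 * A.card ∧
      ∑ k ∈ A, gammaRV h β W k ω ≤ t⁻¹ * A.card} ≤ Real.exp (-n) := by
  have := hind.isProbabilityMeasure
  set δ : ℝ := (2 * 3 ^ d * Real.exp 1)⁻¹
  have hδ0 : 0 ≤ δ := inv_nonneg.2 (by positivity)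
  have hδ1 : δ ≤ 1 := inv_le_one_of_one_le₀ (by
    nlinarith [one_le_pow₀ (M₀ := ℝ) (n := d) (by norm_num : (1 : ℝ) ≤ 3), Real.add_one_le_exp 1])
  set E : Finset (Fin n) → PolymerPath d n → Set Ω := fun A p =>
    {ω | (n : ℝ) ≤ 2 * A.card ∧ ∑ k ∈ A, h (W (k, p.vertex k) ω) ≤ t⁻¹ * A.card}
  have hE : ∀ A p, P.real (E A p) ≤ δ ^ n := by
    intro A p
    by_cases hA : (n : ℝ) ≤ 2 * A.card
    · exact (measureReal_mono fun ω hω => hω.2).trans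
        (measureReal_sum_along_path_le hW hind hmap hh hh0 ht hδ0 hδ1 hq hA p)
    · simpa [E, hA] using pow_nonneg hδ0 n
  have hsub : {ω | ∃ A : Finset (Fin n), (n : ℝ) ≤ 2 * A.card ∧
      ∑ k ∈ A, gammaRV h β W k ω ≤ t⁻¹ * A.card} ⊆ ⋃ A, ⋃ p, E A p := by
    rintro ω ⟨A, hA, hsum⟩
    obtain ⟨p, hp⟩ := exists_path_sum_le_of_sum_gammaOf_le h A hsum
    exact mem_iUnion.2 ⟨A, mem_iUnion.2 ⟨p, hA, hp⟩⟩
  calc _ ≤ ∑ A, ∑ p, P.real (E A p) := (measureReal_mono hsub).trans <|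
        (measureReal_iUnion_fintype_le _).trans <|
          Finset.sum_le_sum fun A _ => measureReal_iUnion_fintype_le _
    _ ≤ ∑ _A : Finset (Fin n), ∑ _p : PolymerPath d n, δ ^ n := by gcongr with A _ p; exact hE A p
    _ = 2 ^ n * Fintype.card (PolymerPath d n) * δ ^ n := by simp [mul_assoc]
    _ ≤ 2 ^ n * (3 ^ d) ^ n * δ ^ n := by gcongr; exact_mod_cast PolymerPath.card_le_pow
    _ = Real.exp (-n) := by
        have : 2 * 3 ^ d * δ = (Real.exp 1)⁻¹ := by simp only [δ]; field_simp
        rw [← mul_pow, ← mul_pow, this, inv_pow, Real.exp_one_pow, Real.exp_neg]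

theorem gamma_lower_tail_general (d : ℕ) (hd : 1 ≤ d)
    (a b : ℝ) (f : ℝ → ℝ)
    (hf_pos : ∀ x ∈ Set.Ioo a b, 0 < f x)
    (hf_zero : ∀ x ∉ Set.Ioo a b, f x = 0)
    (hf_diff : ∀ x ∈ Set.Ioo a b, DifferentiableAt ℝ f x)
    (ν : Measure ℝ) (hν : ν = volume.withDensity fun x => ENNReal.ofReal (f x))
    [IsProbabilityMeasure ν]
    (hh_diff : ∀ x ∈ Set.Ioo a b, DifferentiableAt ℝ (hFun a b f) x) :
    ∃ κ : ℝ, 0 < κ ∧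
      ∀ (n : ℕ), 1 ≤ n → ∀ (β : ℝ), 0 ≤ β →
      ∀ (Ω : Type) [MeasurableSpace Ω] (P : Measure Ω), ∀ _ : IsProbabilityMeasure P,
      ∀ (W : Fin n × (Fin d → ℤ) → Ω → ℝ),
        (∀ i, Measurable (W i)) →
        iIndepFun W P →
        (∀ i, P.map (W i) = ν) →
        P {ω | ∃ A : Finset (Fin n), (n : ℝ) ≤ 2 * A.card ∧
            ∑ k ∈ A, gammaRV (hFun a b f) β W k ω ≤ κ * A.card}
          ≤ ENNReal.ofReal (Real.exp (-(n : ℝ))) := by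
  have : NeZero d := ⟨by omega⟩
  subst hν
  have hf_meas : Measurable f := measurable_of_continuousOn_of_eq_zero measurableSet_Ioo
    (fun x hx => (hf_diff x hx).continuousAt.continuousWithinAt) hf_zero
  have hh_meas : Measurable (hFun a b f) := measurable_of_continuousOn_of_eq_zero
    measurableSet_Ioo (fun x hx => (hh_diff x hx).continuousAt.continuousWithinAt)
    fun x hx => by rw [hFun, hf_zero x hx, div_zero]
  obtain ⟨hf, hf1⟩ := integrableOn_and_setIntegral_eq_one hf_pos hf_zero hf_meas
  obtain ⟨t, hq, ht⟩ : ∃ t, Real.exp 1 * mgf (hFun a b f) _ (-t) ≤ (2 * 3 ^ d * Real.exp 1)⁻¹ ^ 2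
      ∧ 0 < t := by
    have := ((tendsto_mgf_atBot_zero hh_meas.aemeasurable
      (ae_withDensity_hFun_pos hf_pos hf_zero hf_meas hf hf1)).const_mul (Real.exp 1)).comp
        tendsto_neg_atTop_atBot
    rw [mul_zero] at this
    exact ((this.eventually (ge_mem_nhds (by positivity))).and (eventually_gt_atTop 0)).exists
  refine ⟨t⁻¹, inv_pos.2 ht, fun n _ β _ Ω _ P _ W hW hind hmap => ?_⟩
  rw [← ofReal_measureReal]
  exact ENNReal.ofReal_le_ofReal <| measureReal_exists_sum_gammaRV_le hW hind hmap hh_meas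
    (hFun_nonneg hf_pos hf_zero hf hf1) ht hq β

/-- Lemma 2.8: there is a constant `κ > 0` depending only on `ν` and `d`
such that for every `n ≥ 1` and `β ≥ 0`,
`P(∃ A ⊆ {1,…,n}, |A| ≥ n/2 and ∑_{k∈A} γ_k ≤ κ|A|) ≤ e^{−n}`. -/
theorem gamma_lower_tail (d : ℕ) (hd : 1 ≤ d)
    (a b : ℝ) (hab : a < b) (f : ℝ → ℝ)
    (hf_pos : ∀ x ∈ Set.Ioo a b, 0 < f x)
    (hf_zero : ∀ x ∉ Set.Ioo a b, f x = 0)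
    (hf_diff : ∀ x ∈ Set.Ioo a b, DifferentiableAt ℝ f x)
    (ν : Measure ℝ) (hν : ν = volume.withDensity fun x => ENNReal.ofReal (f x))
    [IsProbabilityMeasure ν]
    (hh_diff : ∀ x ∈ Set.Ioo a b, DifferentiableAt ℝ (hFun a b f) x)
    (hh_deriv_bdd : ∃ C : ℝ, ∀ x ∈ Set.Ioo a b, |deriv (hFun a b f) x| ≤ C) :
    ∃ κ : ℝ, 0 < κ ∧
      ∀ (n : ℕ), 1 ≤ n → ∀ (β : ℝ), 0 ≤ β →
      ∀ (Ω : Type) [MeasurableSpace Ω] (P : Measure Ω), ∀ _ : IsProbabilityMeasure P,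
      ∀ (W : Fin n × (Fin d → ℤ) → Ω → ℝ),
        (∀ i, Measurable (W i)) →
        iIndepFun W P →
        (∀ i, P.map (W i) = ν) →
        P {ω | ∃ A : Finset (Fin n), (n : ℝ) ≤ 2 * A.card ∧
            ∑ k ∈ A, gammaRV (hFun a b f) β W k ω ≤ κ * A.card}
          ≤ ENNReal.ofReal (Real.exp (-(n : ℝ))) :=
  gamma_lower_tail_general d hd a b f hf_pos hf_zero hf_diff ν hν hh_diff

end
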